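/- arXiv:2310.06333 — 5 statements merged into one kernel-verified Lean document; each statement's English description precedes it below -/
import Mathlib

section
/- Let (X,Y) be jointly distributed random variables on finite alphabets and fix a pair of values (x,y) with P_x > 0 and P_y > 0. Then: (1) f(Δ_{xy}, P_x·P_y) ≤ 1; and (2) if Δ_{xy} ≠ 0, then min(P_x, P_y, |Δ_{xy}|) ≥ (1/2)·f(Δ_{xy}, P_x·P_y) / log(6 / f(Δ_{xy}, P_x·P_y)). -/
open scoped BigOperators

noncomputable section

/-- Marginal of the first coordinate of a joint pmf. -/
noncomputable def margFst {α β : Type*} [Fintype β] (p : α × β → ℝ) (x : α) : ℝ :=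
  ∑ y, p (x, y)

/-- Marginal of the second coordinate of a joint pmf. -/
noncomputable def margSnd {α β : Type*} [Fintype α] (p : α × β → ℝ) (y : β) : ℝ :=
  ∑ x, p (x, y)

/-- Mutual information `I(X;Y)` of a joint pmf on `α × β` (natural logarithm;
summands with zero probability vanish since `Real.log 0 = 0` and `x / 0 = 0`). -/
noncomputable def mutInfo {α β : Type*} [Fintype α] [Fintype β] (p : α × β → ℝ) : ℝ :=
  ∑ x, ∑ y, p (x, y) * Real.log (p (x, y) / (margFst p x * margSnd p y))

/-- Conditional mutual information `I(X;Y∣Z)` of a joint pmf on `α × β × γ`. -/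
noncomputable def condMutInfo {α β γ : Type*} [Fintype α] [Fintype β] [Fintype γ]
    (p : α × β × γ → ℝ) : ℝ :=
  ∑ x, ∑ y, ∑ z, p (x, y, z) *
    Real.log (p (x, y, z) * (∑ x', ∑ y', p (x', y', z)) /
      ((∑ y', p (x, y', z)) * (∑ x', p (x', y, z))))

/-- `f(a,b) = (a+b)·log((a+b)/b) − a`. -/
noncomputable def fKL (a b : ℝ) : ℝ := (a + b) * Real.log ((a + b) / b) - a

/-!
Write `P = P_{xy}` and `c = P_x·P_y`, so that `f(Δ_{xy}, c) = P·log(P/c) − (P − c)`.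
Since `P ≤ min(P_x, P_y)` and `P_x, P_y ≤ 1`, we have `P² ≤ c ≤ 1` and
`|P − c| ≤ min(P_x, P_y)`. The bound `f ≤ 1` comes from `log(P/c) ≤ log(1/P) ≤ 1/P − 1`.
For (2) it suffices to show `f ≤ 2·|P − c|·log(6/f)`. If `P < c`, then `f ≤ c − P` and
`log(6/f) ≥ log 6 ≥ 1`. If `P > c`, then `f ≤ (P − c)·log(P/c)`, and `log² x ≤ 4x`
together with `(P − c)² ≤ P² ≤ c` gives `f²·P ≤ 4c`, hence `P/c ≤ (6/f)²`.
-/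

open Real

section Marginals

variable {A B : Type*} {p : A × B → ℝ}

lemma apply_le_margFst [Fintype B] (hp : ∀ w, 0 ≤ p w) (x : A) (y : B) :
    p (x, y) ≤ margFst p x :=
  Finset.single_le_sum (fun y' _ => hp (x, y')) (Finset.mem_univ y)

lemma apply_le_margSnd [Fintype A] (hp : ∀ w, 0 ≤ p w) (x : A) (y : B) :
    p (x, y) ≤ margSnd p y :=
  Finset.single_le_sum (fun x' _ => hp (x', y)) (Finset.mem_univ x)

lemma margFst_le_sum [Fintype A] [Fintype B] (hp : ∀ w, 0 ≤ p w) (x : A) :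
    margFst p x ≤ ∑ w, p w := by
  rw [Fintype.sum_prod_type]
  exact Finset.single_le_sum (fun x' _ => Finset.sum_nonneg fun y _ => hp (x', y))
    (Finset.mem_univ x)

lemma margSnd_le_sum [Fintype A] [Fintype B] (hp : ∀ w, 0 ≤ p w) (y : B) :
    margSnd p y ≤ ∑ w, p w := by
  rw [Fintype.sum_prod_type_right]
  exact Finset.single_le_sum (fun y' _ => Finset.sum_nonneg fun x _ => hp (x, y'))
    (Finset.mem_univ y)

end Marginals

lemma abs_sub_mul_le_left {P a b : ℝ} (hP : 0 ≤ P) (hPa : P ≤ a) (hb0 : 0 ≤ b)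
    (hb1 : b ≤ 1) : |P - a * b| ≤ a := by
  have hab : a * b ≤ a := mul_le_of_le_one_right (hP.trans hPa) hb1
  rw [abs_le]
  constructor <;> nlinarith [mul_nonneg (hP.trans hPa) hb0]

lemma log_sq_le_four_mul {x : ℝ} (hx : 1 ≤ x) : log x ^ 2 ≤ 4 * x := by
  have hsqrt : log (√x) ≤ √x := log_le_self (sqrt_nonneg x)
  have hlog : 0 ≤ log (√x) := log_nonneg (one_le_sqrt.mpr hx)
  calc log x ^ 2 = 4 * log (√x) ^ 2 := by rw [log_sqrt (by linarith)]; ring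
    _ ≤ 4 * √x ^ 2 := by gcongr
    _ = 4 * x := by rw [sq_sqrt (by linarith)]

section fKL

variable {P c : ℝ}

lemma fKL_sub_eq (P c : ℝ) : fKL (P - c) c = P * log (P / c) - (P - c) := by
  simp [fKL]

lemma fKL_sub_pos (hP : 0 ≤ P) (hc : 0 < c) (hne : P ≠ c) : 0 < fKL (P - c) c := by
  rw [fKL_sub_eq]
  rcases hP.eq_or_lt with rfl | hP
  · simpa using hc
  have hlog : log (c / P) < c / P - 1 :=
    log_lt_sub_one_of_pos (by positivity) (by rwa [ne_eq, div_eq_one_iff_eq hP.ne', eq_comm])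
  have hinv : log (P / c) = -log (c / P) := by rw [← log_inv, inv_div]
  have hmul : P * (c / P) = c := by field_simp
  rw [hinv]
  nlinarith [mul_lt_mul_of_pos_left hlog hP]

lemma fKL_sub_le_sub_of_le (hP : 0 ≤ P) (hc : 0 < c) (h : P ≤ c) :
    fKL (P - c) c ≤ c - P := by
  have hlog : log (P / c) ≤ 0 := log_nonpos (by positivity) ((div_le_one hc).mpr h)
  rw [fKL_sub_eq]
  nlinarith [mul_nonpos_of_nonneg_of_nonpos hP hlog]

lemma fKL_sub_le_sub_mul_log (hc : 0 < c) (h : c < P) :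
    fKL (P - c) c ≤ (P - c) * log (P / c) := by
  have hcL : c * log (P / c) ≤ P - c := by
    have := mul_le_mul_of_nonneg_left
      (log_le_sub_one_of_pos (div_pos (hc.trans h) hc)) hc.le
    rwa [mul_sub, mul_div_cancel₀ _ hc.ne', mul_one] at this
  rw [fKL_sub_eq]
  linarith

lemma fKL_sub_le_one (hP : 0 ≤ P) (hc : 0 < c) (hc1 : c ≤ 1) (hPc : P * P ≤ c) :
    fKL (P - c) c ≤ 1 := by
  rcases le_or_gt P c with h | h
  · linarith [fKL_sub_le_sub_of_le hP hc h]
  have hP0 : 0 < P := hc.trans h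
  have hlog : log (P / c) ≤ P⁻¹ - 1 := by
    calc log (P / c) ≤ log (P / (P * P)) := by gcongr
      _ = log P⁻¹ := by rw [div_mul_cancel_left₀ hP0.ne']
      _ ≤ P⁻¹ - 1 := log_le_sub_one_of_pos (inv_pos.mpr hP0)
  have hmul : P * (P⁻¹ - 1) = 1 - P := by field_simp
  rw [fKL_sub_eq]
  nlinarith [mul_le_mul_of_nonneg_left hlog hP0.le]

lemma fKL_sub_le_two_mul_sub_mul_log_of_gt (hc : 0 < c) (h : c < P) (hPc : P * P ≤ c) :
    fKL (P - c) c ≤ 2 * (P - c) * log (6 / fKL (P - c) c) := by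
  set f := fKL (P - c) c
  set L := log (P / c)
  have hP0 : 0 < P := hc.trans h
  have hf : 0 < f := fKL_sub_pos hP0.le hc h.ne'
  have hfL : f ≤ (P - c) * L := fKL_sub_le_sub_mul_log hc h
  have hL : 0 ≤ L := log_nonneg ((one_le_div hc).mpr h.le)
  have hLsq : L ^ 2 ≤ 4 * (P / c) := log_sq_le_four_mul ((one_le_div hc).mpr h.le)
  have hfsq : f ^ 2 * P ≤ 4 * c := by
    have hPdiv : P / c * P ≤ 1 := by rw [div_mul_eq_mul_div, div_le_one hc]; exact hPc
    have hsub : (P - c) ^ 2 ≤ c := by nlinarith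
    calc f ^ 2 * P ≤ ((P - c) * L) ^ 2 * P := by gcongr
      _ = (P - c) ^ 2 * (L ^ 2 * P) := by ring
      _ ≤ (P - c) ^ 2 * (4 * (P / c) * P) := by gcongr
      _ = 4 * (P - c) ^ 2 * (P / c * P) := by ring
      _ ≤ 4 * c * 1 := by gcongr
      _ = 4 * c := mul_one _
  have hratio : P / c ≤ (6 / f) ^ 2 := by
    rw [div_pow, div_le_div_iff₀ hc (by positivity)]
    nlinarith
  have hL6 : L ≤ 2 * log (6 / f) := by
    calc L ≤ log ((6 / f) ^ 2) := log_le_log (by positivity) hratio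
      _ = 2 * log (6 / f) := by rw [log_pow]; norm_num
  nlinarith

lemma fKL_sub_le_two_mul_abs_mul_log (hP : 0 ≤ P) (hc : 0 < c) (hc1 : c ≤ 1)
    (hPc : P * P ≤ c) (hne : P ≠ c) :
    fKL (P - c) c ≤ 2 * |P - c| * log (6 / fKL (P - c) c) := by
  rcases hne.lt_or_gt with h | h
  · have hf : fKL (P - c) c ≤ c - P := fKL_sub_le_sub_of_le hP hc h.le
    have hlog : 1 ≤ log (6 / fKL (P - c) c) := by
      have h6 : 6 ≤ 6 / fKL (P - c) c :=
        (le_div_iff₀ (fKL_sub_pos hP hc hne)).mpr (by linarith [fKL_sub_le_one hP hc hc1 hPc])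
      rw [le_log_iff_exp_le (by positivity)]
      linarith [exp_one_lt_d9]
    rw [abs_of_neg (by linarith)]
    nlinarith
  · rw [abs_of_pos (by linarith)]
    exact fKL_sub_le_two_mul_sub_mul_log_of_gt hc h hPc

lemma half_fKL_sub_div_log_le_abs (hP : 0 ≤ P) (hc : 0 < c) (hc1 : c ≤ 1)
    (hPc : P * P ≤ c) (hne : P ≠ c) :
    1 / 2 * fKL (P - c) c / log (6 / fKL (P - c) c) ≤ |P - c| := by
  have hf := fKL_sub_pos hP hc hne
  have hlog : 0 < log (6 / fKL (P - c) c) :=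
    log_pos ((lt_div_iff₀ hf).mpr (by linarith [fKL_sub_le_one hP hc hc1 hPc]))
  rw [div_le_iff₀ hlog]
  linarith [fKL_sub_le_two_mul_abs_mul_log hP hc hc1 hPc hne]

end fKL

/-- Properties of `f(Δ_{xy}, P_x·P_y)`:
(1) it is at most `1`; and (2) if `Δ_{xy} ≠ 0` then
`min(P_x, P_y, |Δ_{xy}|) ≥ (1/2)·f / log(6/f)`. -/
theorem f_properties {A B : Type*} [Fintype A] [Fintype B]
    (p : A × B → ℝ) (hp : ∀ w, 0 ≤ p w) (hsum : (∑ w, p w) = 1)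
    (x : A) (y : B) (hx : 0 < margFst p x) (hy : 0 < margSnd p y) :
    fKL (p (x, y) - margFst p x * margSnd p y) (margFst p x * margSnd p y) ≤ 1 ∧
    (p (x, y) - margFst p x * margSnd p y ≠ 0 →
      (1 / 2) *
          fKL (p (x, y) - margFst p x * margSnd p y) (margFst p x * margSnd p y) /
          Real.log (6 /
            fKL (p (x, y) - margFst p x * margSnd p y) (margFst p x * margSnd p y)) ≤
        min (margFst p x)
          (min (margSnd p y) |p (x, y) - margFst p x * margSnd p y|)) := by
  set P := p (x, y)
  set a := margFst p x
  set b := margSnd p y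
  have hP : 0 ≤ P := hp (x, y)
  have hPa : P ≤ a := apply_le_margFst hp x y
  have hPb : P ≤ b := apply_le_margSnd hp x y
  have ha1 : a ≤ 1 := hsum ▸ margFst_le_sum hp x
  have hb1 : b ≤ 1 := hsum ▸ margSnd_le_sum hp y
  have hc : 0 < a * b := mul_pos hx hy
  have hc1 : a * b ≤ 1 := mul_le_one₀ ha1 hy.le hb1
  have hPc : P * P ≤ a * b := mul_le_mul hPa hPb hP hx.le
  refine ⟨fKL_sub_le_one hP hc hc1 hPc, fun hne => ?_⟩
  have hbound := half_fKL_sub_div_log_le_abs hP hc hc1 hPc (sub_ne_zero.mp hne)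
  have hDa : |P - a * b| ≤ a := abs_sub_mul_le_left hP hPa hy.le hb1
  have hDb : |P - a * b| ≤ b := mul_comm a b ▸ abs_sub_mul_le_left hP hPb hx.le ha1
  exact le_min (hbound.trans hDa) (le_min (hbound.trans hDb) hbound)
end
end

section
/- Let (X,Y) be jointly distributed random variables on finite alphabets, fix a pair of values (x,y) with marginal probabilities P_x, P_y, let N > 1 be an integer and δ ∈ (0,1). Then with probability at least 1−3δ over N i.i.d. samples of (X,Y), the empirical marginal frequencies satisfy |P̂_x·P̂_y − P_x·P_y| ≤ 6·√(P_x·P_y·log(2/δ)/N) + 18·(P_x + P_y)·log(2/δ)/N + 18·log²(2/δ)/N². -/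
open scoped BigOperators

noncomputable section

open Classical in
/-- Probability that `N` i.i.d. samples from the pmf `p` satisfy the event `E`. -/
noncomputable def iidProb {α : Type*} [Fintype α] (p : α → ℝ) (N : ℕ)
    (E : (Fin N → α) → Prop) : ℝ :=
  ∑ s : Fin N → α, if E s then ∏ i, p (s i) else 0

open Classical in
/-- Empirical frequency (relative frequency) of the outcome `a` among the samples `s`. -/
noncomputable def empFreq {α : Type*} [Fintype α] {N : ℕ} (s : Fin N → α) (a : α) : ℝ :=
  ((Finset.univ.filter fun i => s i = a).card : ℝ) / N

/-!
Each marginal frequency is an average of `N` i.i.d. Bernoulli variables, so a Chernoff bound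
with exponent parameter `λ = min (1, √(L / (N q)))`, `L = log (2 / δ)`, puts it within
`3 √(q L / N) + 3 L / N` of its mean `q` except with probability `δ`. On the intersection of the
two good events, expanding `P̂_x P̂_y − P_x P_y = P_x (P̂_y − P_y) + P_y (P̂_x − P_x) +
(P̂_x − P_x)(P̂_y − P_y)` and using AM-GM on the cross terms gives the bound.
-/

open Finset Real

lemma exists_mul_sq_sub_mul_le_neg {M L : ℝ} (hL : 0 < L) :
    ∃ l, 0 ≤ l ∧ l ≤ 1 ∧ M * l ^ 2 - l * (3 * √(M * L) + 3 * L) ≤ -L := by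
  have hML : 0 ≤ √(M * L) := sqrt_nonneg _
  rcases le_or_gt M L with hle | hlt
  · exact ⟨1, zero_le_one, le_rfl, by nlinarith⟩
  · have hM0 : 0 < M := hL.trans hlt
    refine ⟨√(L / M), sqrt_nonneg _, sqrt_le_one.2 ((div_le_one hM0).2 hlt.le), ?_⟩
    have hsq : M * √(L / M) ^ 2 = L := by rw [sq_sqrt (by positivity)]; field_simp
    have hprod : √(L / M) * √(M * L) = L := by
      rw [← sqrt_mul (by positivity), show L / M * (M * L) = L ^ 2 by field_simp, sqrt_sq hL.le]
    nlinarith [sqrt_nonneg (L / M)]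

lemma abs_mul_sub_mul_le (a b P Q : ℝ) (hP : 0 ≤ P) (hQ : 0 ≤ Q) :
    |a * b - P * Q| ≤ P * |b - Q| + Q * |a - P| + |a - P| * |b - Q| := by
  calc |a * b - P * Q| = |P * (b - Q) + Q * (a - P) + (a - P) * (b - Q)| := by ring_nf
    _ ≤ |P * (b - Q)| + |Q * (a - P)| + |(a - P) * (b - Q)| := abs_add_three _ _ _
    _ = _ := by rw [abs_mul, abs_mul, abs_mul, abs_of_nonneg hP, abs_of_nonneg hQ]

lemma abs_mul_sub_mul_le_of_abs_sub_le {a b P Q u : ℝ} (hP0 : 0 ≤ P) (hP1 : P ≤ 1)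
    (hQ0 : 0 ≤ Q) (hQ1 : Q ≤ 1) (hu : 0 ≤ u)
    (ha : |a - P| ≤ 3 * √(P * u) + 3 * u) (hb : |b - Q| ≤ 3 * √(Q * u) + 3 * u) :
    |a * b - P * Q| ≤ 6 * √(P * Q * u) + 18 * (P + Q) * u + 18 * u ^ 2 := by
  set r := √(P * u)
  set s := √(Q * u)
  have hr : r ^ 2 = P * u := sq_sqrt (by positivity)
  have hs : s ^ 2 = Q * u := sq_sqrt (by positivity)
  have hPQu : 0 ≤ P * Q * u := by positivity
  have hPs : P * s ≤ √(P * Q * u) := le_sqrt_of_sq_le (by rw [mul_pow, hs]; nlinarith)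
  have hQr : Q * r ≤ √(P * Q * u) := le_sqrt_of_sq_le (by rw [mul_pow, hr]; nlinarith)
  have hrs : r * s ≤ (P + Q) * u / 2 := by nlinarith [sq_nonneg (r - s)]
  have hru : r * u ≤ (P * u + u ^ 2) / 2 := by nlinarith [sq_nonneg (r - u)]
  have hsu : s * u ≤ (Q * u + u ^ 2) / 2 := by nlinarith [sq_nonneg (s - u)]
  have hdev : |a - P| * |b - Q| ≤ (3 * r + 3 * u) * (3 * s + 3 * u) :=
    mul_le_mul ha hb (abs_nonneg _) (by positivity)
  nlinarith [abs_mul_sub_mul_le a b P Q hP0 hQ0, mul_le_mul_of_nonneg_left hb hP0,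
    mul_le_mul_of_nonneg_left ha hQ0, mul_nonneg hP0 hu, mul_nonneg hQ0 hu]

section IidProb

open Classical

variable {α : Type*} [Fintype α] {p : α → ℝ} {N : ℕ}

lemma iidProb_mono (hp : ∀ a, 0 ≤ p a) {E F : (Fin N → α) → Prop} (h : ∀ s, E s → F s) :
    iidProb p N E ≤ iidProb p N F := by
  refine sum_le_sum fun s _ => ?_
  have := prod_nonneg fun i (_ : i ∈ univ) => hp (s i)
  split_ifs with hE hF <;> first | exact le_rfl | exact this | exact absurd (h s hE) hF

lemma iidProb_or_le (hp : ∀ a, 0 ≤ p a) (E F : (Fin N → α) → Prop) :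
    iidProb p N (fun s => E s ∨ F s) ≤ iidProb p N E + iidProb p N F := by
  rw [iidProb, iidProb, iidProb, ← sum_add_distrib]
  refine sum_le_sum fun s _ => ?_
  have := prod_nonneg fun i (_ : i ∈ univ) => hp (s i)
  split_ifs <;> simp_all

lemma iidProb_add_iidProb_not (hsum : ∑ a, p a = 1) (E : (Fin N → α) → Prop) :
    iidProb p N E + iidProb p N (fun s => ¬ E s) = 1 := by
  rw [iidProb, iidProb, ← sum_add_distrib, ← one_pow N, ← hsum, Fintype.sum_pow]
  exact sum_congr rfl fun s _ => by by_cases h : E s <;> simp [h]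

lemma one_sub_le_iidProb_of_not_imp_or (hp : ∀ a, 0 ≤ p a) (hsum : ∑ a, p a = 1)
    {E F G : (Fin N → α) → Prop} (h : ∀ s, ¬ E s → F s ∨ G s) {εF εG : ℝ}
    (hF : iidProb p N F ≤ εF) (hG : iidProb p N G ≤ εG) :
    1 - (εF + εG) ≤ iidProb p N E := by
  have := iidProb_add_iidProb_not hsum E
  have := (iidProb_mono hp h).trans (iidProb_or_le hp F G)
  linarith

/-- Chernoff's bound: the indicator of `E` is at most `exp (∑ i, f (s i) - r)`, whose expectation
factorizes over the independent samples. -/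
lemma iidProb_le_exp_neg_mul_sum_mul_exp_pow (hp : ∀ a, 0 ≤ p a) (f : α → ℝ) (r : ℝ)
    {E : (Fin N → α) → Prop} (hE : ∀ s, E s → r ≤ ∑ i, f (s i)) :
    iidProb p N E ≤ exp (-r) * (∑ a, p a * exp (f a)) ^ N := by
  rw [Fintype.sum_pow, mul_sum]
  refine sum_le_sum fun s _ => ?_
  have hP := prod_nonneg fun i (_ : i ∈ univ) => hp (s i)
  rw [prod_mul_distrib, ← exp_sum]
  split_ifs with h
  · calc ∏ i, p (s i) = (∏ i, p (s i)) * 1 := (mul_one _).symm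
      _ ≤ (∏ i, p (s i)) * exp ((∑ i, f (s i)) - r) :=
        mul_le_mul_of_nonneg_left (one_le_exp (by linarith [hE s h])) hP
      _ = _ := by rw [exp_sub, exp_neg]; ring
  · positivity

lemma sum_mul_exp_ite_le (hp : ∀ a, 0 ≤ p a) (hsum : ∑ a, p a = 1) (φ : α → Prop) {c : ℝ}
    (hc : |c| ≤ 1) :
    ∑ a, p a * exp (if φ a then c else 0) ≤ exp ((∑ a ∈ univ.filter φ, p a) * (c + c ^ 2)) := by
  set q := ∑ a ∈ univ.filter φ, p a
  have hq : 0 ≤ q := sum_nonneg fun a _ => hp a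
  have hcompl : ∑ a ∈ univ.filter (¬φ ·), p a = 1 - q := by
    rw [← hsum, ← sum_filter_add_sum_filter_not univ φ]; ring
  have hexp : exp c ≤ 1 + c + c ^ 2 := by
    linarith [(abs_le.1 (abs_exp_sub_one_sub_id_le hc)).2]
  simp only [apply_ite exp, exp_zero, mul_ite, mul_one, sum_ite, ← sum_mul, hcompl]
  nlinarith [add_one_le_exp (q * (c + c ^ 2)), mul_le_mul_of_nonneg_left hexp hq]

def sampleCount (φ : α → Prop) (s : Fin N → α) : ℕ :=
  #{i | φ (s i)}

lemma iidProb_le_exp_of_mul_le_mul_sampleCount (hp : ∀ a, 0 ≤ p a) (hsum : ∑ a, p a = 1)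
    (φ : α → Prop) {c : ℝ} (hc : |c| ≤ 1) (r : ℝ) {E : (Fin N → α) → Prop}
    (hE : ∀ s, E s → c * r ≤ c * sampleCount φ s) :
    iidProb p N E ≤ exp (N * (∑ a ∈ univ.filter φ, p a) * (c + c ^ 2) - c * r) := by
  have hsum_ite (s : Fin N → α) : ∑ i, (if φ (s i) then c else 0) = c * sampleCount φ s := by
    simp [sampleCount, sum_ite, mul_comm]
  have hmgf : 0 ≤ ∑ a, p a * exp (if φ a then c else 0) :=
    sum_nonneg fun a _ => mul_nonneg (hp a) (exp_pos _).le
  calc iidProb p N E ≤ exp (-(c * r)) * (∑ a, p a * exp (if φ a then c else 0)) ^ N :=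
        iidProb_le_exp_neg_mul_sum_mul_exp_pow hp _ _ fun s hs =>
          (hE s hs).trans_eq (hsum_ite s).symm
    _ ≤ exp (-(c * r)) * exp ((∑ a ∈ univ.filter φ, p a) * (c + c ^ 2)) ^ N := by
        gcongr
        exact sum_mul_exp_ite_le hp hsum φ hc
    _ = _ := by rw [← exp_nat_mul, ← exp_add]; ring_nf

lemma iidProb_lt_abs_sampleCount_sub_le (hp : ∀ a, 0 ≤ p a) (hsum : ∑ a, p a = 1)
    (φ : α → Prop) {l : ℝ} (hl0 : 0 ≤ l) (hl1 : l ≤ 1) (t : ℝ) :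
    iidProb p N (fun s => t < |(sampleCount φ s : ℝ) - N * ∑ a ∈ univ.filter φ, p a|) ≤
      2 * exp (N * (∑ a ∈ univ.filter φ, p a) * l ^ 2 - l * t) := by
  set q := ∑ a ∈ univ.filter φ, p a
  have hupper := iidProb_le_exp_of_mul_le_mul_sampleCount hp hsum φ
    (abs_le.2 ⟨by linarith, hl1⟩) (N * q + t)
    (E := fun s : Fin N → α => N * q + t ≤ sampleCount φ s)
    fun s hs => mul_le_mul_of_nonneg_left hs hl0
  have hlower := iidProb_le_exp_of_mul_le_mul_sampleCount hp hsum φ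
    (by rwa [abs_neg, abs_of_nonneg hl0]) (N * q - t)
    (E := fun s : Fin N → α => sampleCount φ s ≤ N * q - t)
    fun s hs => mul_le_mul_of_nonpos_left hs (neg_nonpos.2 hl0)
  rw [show N * q * (l + l ^ 2) - l * (N * q + t) = N * q * l ^ 2 - l * t by ring] at hupper
  rw [show N * q * (-l + (-l) ^ 2) - -l * (N * q - t) = N * q * l ^ 2 - l * t by ring] at hlower
  calc _ ≤ iidProb p N (fun s => N * q + t ≤ sampleCount φ s ∨ sampleCount φ s ≤ N * q - t) :=
        iidProb_mono hp fun s hs => by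
          rcases lt_abs.1 hs with h | h
          · exact Or.inl (by linarith)
          · exact Or.inr (by linarith)
    _ ≤ _ := iidProb_or_le hp _ _
    _ ≤ _ := by linarith

lemma iidProb_lt_abs_sampleCount_div_sub_le (hp : ∀ a, 0 ≤ p a) (hsum : ∑ a, p a = 1)
    (φ : α → Prop) {L : ℝ} (hL : 0 < L) (hN : 0 < N) :
    iidProb p N (fun s => 3 * √((∑ a ∈ univ.filter φ, p a) * (L / N)) + 3 * (L / N) <
      |(sampleCount φ s : ℝ) / N - ∑ a ∈ univ.filter φ, p a|) ≤ 2 * exp (-L) := by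
  set q := ∑ a ∈ univ.filter φ, p a
  have hN0 : (0 : ℝ) < N := Nat.cast_pos.2 hN
  obtain ⟨l, hl0, hl1, hl⟩ := exists_mul_sq_sub_mul_le_neg (M := N * q) hL
  have hsqrt : √(q * (L / N)) = √(N * q * L) / N := by
    rw [show q * (L / N) = N * q * L / N ^ 2 by field_simp, sqrt_div' _ (sq_nonneg _),
      sqrt_sq hN0.le]
  calc _ ≤ iidProb p N (fun s => 3 * √(N * q * L) + 3 * L < |(sampleCount φ s : ℝ) - N * q|) :=
        iidProb_mono hp fun s hs => by
          rwa [hsqrt, show (sampleCount φ s : ℝ) / N - q = (sampleCount φ s - N * q) / N by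
            field_simp, abs_div, abs_of_pos hN0, mul_div_assoc', mul_div_assoc',
            ← add_div, div_lt_div_iff_of_pos_right hN0] at hs
    _ ≤ 2 * exp (N * q * l ^ 2 - l * (3 * √(N * q * L) + 3 * L)) :=
        iidProb_lt_abs_sampleCount_sub_le hp hsum φ hl0 hl1 _
    _ ≤ 2 * exp (-L) := by gcongr

end IidProb

lemma margFst_nonneg {A B : Type*} [Fintype B] {p : A × B → ℝ} (hp : ∀ w, 0 ≤ p w) (x : A) :
    0 ≤ margFst p x :=
  sum_nonneg fun _ _ => hp _

lemma margSnd_nonneg {A B : Type*} [Fintype A] {p : A × B → ℝ} (hp : ∀ w, 0 ≤ p w) (y : B) :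
    0 ≤ margSnd p y :=
  sum_nonneg fun _ _ => hp _

section Marginals

open Classical

variable {A B : Type*} [Fintype A] [Fintype B]

lemma margFst_eq_sum_filter (p : A × B → ℝ) (x : A) :
    margFst p x = ∑ w ∈ univ.filter (·.1 = x), p w := by
  rw [sum_filter, Fintype.sum_prod_type, Fintype.sum_eq_single x fun a ha => by simp [ha]]
  simp [margFst]

lemma margSnd_eq_sum_filter (p : A × B → ℝ) (y : B) :
    margSnd p y = ∑ w ∈ univ.filter (·.2 = y), p w := by
  rw [sum_filter, Fintype.sum_prod_type_right, Fintype.sum_eq_single y fun b hb => by simp [hb]]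
  simp [margSnd]

lemma margFst_le_one {p : A × B → ℝ} (hp : ∀ w, 0 ≤ p w) (hsum : ∑ w, p w = 1) (x : A) :
    margFst p x ≤ 1 := by
  rw [margFst_eq_sum_filter, ← hsum]
  exact sum_le_sum_of_subset_of_nonneg (filter_subset _ _) fun w _ _ => hp w

lemma margSnd_le_one {p : A × B → ℝ} (hp : ∀ w, 0 ≤ p w) (hsum : ∑ w, p w = 1) (y : B) :
    margSnd p y ≤ 1 := by
  rw [margSnd_eq_sum_filter, ← hsum]
  exact sum_le_sum_of_subset_of_nonneg (filter_subset _ _) fun w _ _ => hp w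

variable {N : ℕ}

lemma margFst_empFreq (s : Fin N → A × B) (x : A) :
    margFst (empFreq s) x = sampleCount (·.1 = x) s / N := by
  rw [margFst, sampleCount, card_eq_sum_card_fiberwise (f := fun i => (s i).2) (t := univ)
    (fun _ _ => mem_coe.2 (mem_univ _)), Nat.cast_sum, sum_div]
  simp [empFreq, filter_filter, Prod.ext_iff]

lemma margSnd_empFreq (s : Fin N → A × B) (y : B) :
    margSnd (empFreq s) y = sampleCount (·.2 = y) s / N := by
  rw [margSnd, sampleCount, card_eq_sum_card_fiberwise (f := fun i => (s i).1) (t := univ)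
    (fun _ _ => mem_coe.2 (mem_univ _)), Nat.cast_sum, sum_div]
  simp [empFreq, filter_filter, Prod.ext_iff, and_comm]

end Marginals

/-- With probability at least `1 − 3δ`, the product of empirical marginal frequencies satisfies
`|P̂_x·P̂_y − P_x·P_y| ≤ 6√(P_x P_y log(2/δ)/N) + 18(P_x+P_y)log(2/δ)/N + 18 log²(2/δ)/N²`. -/
theorem empirical_product_concentration {A B : Type*} [Fintype A] [Fintype B]
    (p : A × B → ℝ) (hp : ∀ w, 0 ≤ p w) (hsum : (∑ w, p w) = 1)
    (x : A) (y : B) (N : ℕ) (hN : 1 < N) (δ : ℝ) (hδ0 : 0 < δ) (hδ1 : δ < 1) :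
    1 - 3 * δ ≤ iidProb p N (fun s =>
      |margFst (empFreq s) x * margSnd (empFreq s) y - margFst p x * margSnd p y| ≤
        6 * Real.sqrt (margFst p x * margSnd p y * Real.log (2 / δ) / N) +
          18 * (margFst p x + margSnd p y) * Real.log (2 / δ) / N +
          18 * Real.log (2 / δ) ^ 2 / (N : ℝ) ^ 2) := by
  set L := log (2 / δ)
  have hL : 0 < L := log_pos ((one_lt_div hδ0).2 (by linarith))
  have hδ : 2 * exp (-L) = δ := by
    rw [exp_neg, exp_log (by positivity), inv_div]; field_simp
  have hx := iidProb_lt_abs_sampleCount_div_sub_le hp hsum (·.1 = x) hL (by omega : 0 < N)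
  have hy := iidProb_lt_abs_sampleCount_div_sub_le hp hsum (·.2 = y) hL (by omega : 0 < N)
  rw [← margFst_eq_sum_filter] at hx
  rw [← margSnd_eq_sum_filter] at hy
  refine le_trans (by linarith) (one_sub_le_iidProb_of_not_imp_or hp hsum (fun s hs => ?_) hx hy)
  by_contra! hdev
  refine hs ?_
  rw [margFst_empFreq, margSnd_empFreq]
  refine (abs_mul_sub_mul_le_of_abs_sub_le (margFst_nonneg hp x) (margFst_le_one hp hsum x)
    (margSnd_nonneg hp y) (margSnd_le_one hp hsum y) (by positivity) hdev.1 hdev.2).trans_eq ?_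
  simp only [mul_div_assoc, div_pow]
end
end

section
/- For every α ∈ [0, 1/2], the distributions P1 and P2 satisfy d_H²(P1, P2) ≤ α². -/
open scoped BigOperators

noncomputable section

/-- The distribution `P1` on `{0,1}³` (coordinates `(x,y,z)`):
`P1(x,y,z) = (1/2)·(1/4 + (1/2)·1[x=z])·((1−α)/2 + α·1[y=z])`. -/
noncomputable def P1 (a : ℝ) : Bool × Bool × Bool → ℝ := fun w =>
  (1 / 2) * (1 / 4 + (1 / 2) * (if w.1 = w.2.2 then (1 : ℝ) else 0)) *
    ((1 - a) / 2 + a * (if w.2.1 = w.2.2 then (1 : ℝ) else 0))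

/-- The distribution `P2` on `{0,1}³` (coordinates `(x,y,z)`):
`P2(x,y,z) = (1/4)·((1/2)·1[x=z] + α·1[y=z] + (1/4 − α/2))`. -/
noncomputable def P2 (a : ℝ) : Bool × Bool × Bool → ℝ := fun w =>
  (1 / 4) * ((1 / 2) * (if w.1 = w.2.2 then (1 : ℝ) else 0) +
    a * (if w.2.1 = w.2.2 then (1 : ℝ) else 0) + (1 / 4 - a / 2))

/-- Squared Hellinger distance between pmfs on a finite set. -/
noncomputable def hellingerSq {α : Type*} [Fintype α] (P Q : α → ℝ) : ℝ :=
  1 - ∑ w, Real.sqrt (P w * Q w)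

/-!
Writing `d_H²(P, Q) = ½ ∑ (√P − √Q)²` and bounding
`(√p − √q)² = (p − q)² / (√p + √q)² ≤ (p − q)² / p` gives `d_H²(P1, P2) ≤ χ²(P2‖P1) / 2`.
Here `|P1 − P2| = α/16` at every point and `∑ 1/P1 = 256 / (3(1 − α²))`, so
`d_H²(P1, P2) ≤ α² / (6(1 − α²)) ≤ α²`.
-/

/-- `χ²(P‖Q)`. -/
noncomputable def chiSqDiv {α : Type*} [Fintype α] (P Q : α → ℝ) : ℝ :=
  ∑ w, (P w - Q w) ^ 2 / Q w

theorem hellingerSq_eq_half_sum_sq_sub_sqrt {α : Type*} [Fintype α] {P Q : α → ℝ}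
    (hP : ∀ w, 0 ≤ P w) (hQ : ∀ w, 0 ≤ Q w) (hP1 : ∑ w, P w = 1) (hQ1 : ∑ w, Q w = 1) :
    hellingerSq P Q = (1 / 2) * ∑ w, (Real.sqrt (P w) - Real.sqrt (Q w)) ^ 2 := by
  have hterm : ∀ w, (Real.sqrt (P w) - Real.sqrt (Q w)) ^ 2 =
      P w + Q w - 2 * Real.sqrt (P w * Q w) := fun w => by
    rw [sub_sq, Real.sq_sqrt (hP w), Real.sq_sqrt (hQ w), Real.sqrt_mul (hP w)]
    ring
  simp only [hellingerSq, hterm, Finset.sum_sub_distrib, Finset.sum_add_distrib,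
    ← Finset.mul_sum, hP1, hQ1]
  ring

theorem sq_sqrt_sub_sqrt_le {p q : ℝ} (hp : 0 < p) (hq : 0 ≤ q) :
    (Real.sqrt p - Real.sqrt q) ^ 2 ≤ (q - p) ^ 2 / p := by
  rw [le_div_iff₀ hp]
  have hfactor : p - q = (Real.sqrt p - Real.sqrt q) * (Real.sqrt q + Real.sqrt p) := by
    linear_combination Real.sq_sqrt hq - Real.sq_sqrt hp.le
  have hsum : p ≤ (Real.sqrt q + Real.sqrt p) ^ 2 := by
    nlinarith [Real.sq_sqrt hp.le, Real.sqrt_nonneg p, Real.sqrt_nonneg q]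
  rw [show (q - p) ^ 2 = (p - q) ^ 2 by ring, hfactor, mul_pow]
  exact mul_le_mul_of_nonneg_left hsum (sq_nonneg _)

theorem hellingerSq_le_half_chiSqDiv {α : Type*} [Fintype α] {P Q : α → ℝ}
    (hP : ∀ w, 0 < P w) (hQ : ∀ w, 0 ≤ Q w) (hP1 : ∑ w, P w = 1) (hQ1 : ∑ w, Q w = 1) :
    hellingerSq P Q ≤ chiSqDiv Q P / 2 := by
  rw [hellingerSq_eq_half_sum_sq_sub_sqrt (fun w => (hP w).le) hQ hP1 hQ1, chiSqDiv]
  linarith [Finset.sum_le_sum fun w (_ : w ∈ Finset.univ) => sq_sqrt_sub_sqrt_le (hP w) (hQ w)]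

section

variable {a : ℝ}

theorem P1_pos (ha : |a| < 1) (w : Bool × Bool × Bool) : 0 < P1 a w := by
  obtain ⟨ha₁, ha₂⟩ := abs_lt.mp ha
  unfold P1
  split_ifs <;> nlinarith

theorem P2_nonneg (ha : |a| ≤ 1 / 2) (w : Bool × Bool × Bool) : 0 ≤ P2 a w := by
  obtain ⟨ha₁, ha₂⟩ := abs_le.mp ha
  unfold P2
  split_ifs <;> nlinarith

theorem sum_P1 : ∑ w, P1 a w = 1 := by
  simp only [P1, Fintype.sum_prod_type, Fintype.sum_bool]
  norm_num
  ring

theorem sum_P2 : ∑ w, P2 a w = 1 := by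
  simp only [P2, Fintype.sum_prod_type, Fintype.sum_bool]
  norm_num
  ring

theorem sq_P2_sub_P1 (w : Bool × Bool × Bool) : (P2 a w - P1 a w) ^ 2 = (a / 16) ^ 2 := by
  unfold P1 P2
  split_ifs <;> ring

theorem sum_inv_P1 (ha : |a| < 1) : ∑ w, (P1 a w)⁻¹ = 256 / (3 * (1 - a ^ 2)) := by
  obtain ⟨ha₁, ha₂⟩ := abs_lt.mp ha
  have h₁ : 1 - a ≠ 0 := by linarith
  have h₂ : 1 + a ≠ 0 := by linarith
  simp only [P1, Fintype.sum_prod_type, Fintype.sum_bool]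
  norm_num
  rw [show (1 - a) / 2 + a = (1 + a) / 2 by ring, show 1 - a ^ 2 = (1 - a) * (1 + a) by ring]
  field_simp
  ring

theorem chiSqDiv_P2_P1 (ha : |a| < 1) : chiSqDiv (P2 a) (P1 a) = a ^ 2 / (3 * (1 - a ^ 2)) := by
  simp only [chiSqDiv, sq_P2_sub_P1, div_eq_mul_inv (_ ^ 2), ← Finset.mul_sum, sum_inv_P1 ha]
  ring

end

/-- The squared Hellinger distance between `P1` and `P2` is at most `α²`. -/
theorem hellinger_P1_P2 (a : ℝ) (h0 : 0 ≤ a) (h1 : a ≤ 1 / 2) :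
    hellingerSq (P1 a) (P2 a) ≤ a ^ 2 := by
  have ha : |a| ≤ 1 / 2 := abs_le.mpr ⟨by linarith, h1⟩
  have ha' : |a| < 1 := by linarith
  calc hellingerSq (P1 a) (P2 a)
      ≤ chiSqDiv (P2 a) (P1 a) / 2 :=
        hellingerSq_le_half_chiSqDiv (P1_pos ha') (P2_nonneg ha) sum_P1 sum_P2
    _ = a ^ 2 / (3 * (1 - a ^ 2)) / 2 := by rw [chiSqDiv_P2_P1 ha']
    _ ≤ a ^ 2 := by
        rw [div_div, div_le_iff₀ (by nlinarith)]
        nlinarith [mul_nonneg (sq_nonneg a) (show 0 ≤ 5 - 6 * a ^ 2 by nlinarith)]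
end
end

section
/- For every α ∈ [0, 1/2), the distribution P1 satisfies d_KL(P1 ‖ (P1)_{G1}) = 0, where (P1)_{G1} is the projection of P1 onto the chain X→Z→Y. Moreover, there exist constants c > 0 and α₀ ∈ (0, 1/2) such that for every α ∈ (0, α₀], d_KL(P1 ‖ (P1)_{G2}) ≥ c·α², where (P1)_{G2} is the projection of P1 onto the v-structure X→Z←Y. -/
open scoped BigOperators

noncomputable section

/-- KL divergence between pmfs on a finite set (natural logarithm). -/
noncomputable def klDiv {α : Type*} [Fintype α] (P Q : α → ℝ) : ℝ :=
  ∑ w, P w * Real.log (P w / Q w)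

/-- Projection of a joint pmf of `(X,Y,Z)` onto the chain `X → Z → Y`:
`P_{G1}(x,y,z) = P(x)·P(z∣x)·P(y∣z)`. -/
noncomputable def projChain {A B C : Type*} [Fintype A] [Fintype B] [Fintype C]
    (p : A × B × C → ℝ) : A × B × C → ℝ := fun w =>
  (∑ y, ∑ z, p (w.1, y, z)) *
    ((∑ y, p (w.1, y, w.2.2)) / (∑ y, ∑ z, p (w.1, y, z))) *
    ((∑ x, p (x, w.2.1, w.2.2)) / (∑ x, ∑ y, p (x, y, w.2.2)))

/-- Projection of a joint pmf of `(X,Y,Z)` onto the v-structure `X → Z ← Y`: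
`P_{G2}(x,y,z) = P(x)·P(y)·P(z∣x,y)`. -/
noncomputable def projV {A B C : Type*} [Fintype A] [Fintype B] [Fintype C]
    (p : A × B × C → ℝ) : A × B × C → ℝ := fun w =>
  (∑ y, ∑ z, p (w.1, y, z)) * (∑ x, ∑ z, p (x, w.2.1, z)) *
    (p w / (∑ z, p (w.1, w.2.1, z)))

/-! `P1 a = P(z) · P(x|z) · P(y|z)` by construction, so `X ⊥ Y | Z` and the chain projection of
`P1 a` is `P1 a` itself. For the v-structure, `P / P_{G2} = P(x,y) / (P(x) P(y))`, so
`d_KL(P ‖ P_{G2})` is the mutual information `I(X;Y)`. Under `P1 a` the marginals of `X` and `Y`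
are uniform and `X = Y` with probability `(2 + a)/4`, which gives
`I(X;Y) = ((1+s) log(1+s) + (1-s) log(1-s)) / 2` with `s = a/2`; the bounds
`log((1+s)/(1-s)) ≥ 2s` and `log(1-s²) ≥ 1 - 1/(1-s²)` make this at least `s²/4`. -/

open Real

section Marginals

variable {A B C : Type*} [Fintype A] [Fintype B] [Fintype C] (p : A × B × C → ℝ)

def margX (x : A) : ℝ := ∑ y, ∑ z, p (x, y, z)

def margY (y : B) : ℝ := ∑ x, ∑ z, p (x, y, z)

def margZ (z : C) : ℝ := ∑ x, ∑ y, p (x, y, z)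

def margXY (x : A) (y : B) : ℝ := ∑ z, p (x, y, z)

def margXZ (x : A) (z : C) : ℝ := ∑ y, p (x, y, z)

def margYZ (y : B) (z : C) : ℝ := ∑ x, p (x, y, z)

end Marginals

lemma klDiv_self {α : Type*} [Fintype α] (p : α → ℝ) : klDiv p p = 0 := by
  refine Finset.sum_eq_zero fun w _ => ?_
  rcases eq_or_ne (p w) 0 with h | h
  · simp [h]
  · simp [div_self h]

section Projections

variable {A B C : Type*} [Fintype A] [Fintype B] [Fintype C]

def mutualInfoXY (p : A × B × C → ℝ) : ℝ :=
  ∑ x, ∑ y, margXY p x y * log (margXY p x y / (margX p x * margY p y))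

lemma projChain_eq_self {p : A × B × C → ℝ} (hX : ∀ x, margX p x ≠ 0) (hZ : ∀ z, margZ p z ≠ 0)
    (hXYZ : ∀ x y z, p (x, y, z) * margZ p z = margXZ p x z * margYZ p y z) :
    projChain p = p := by
  funext ⟨x, y, z⟩
  change margX p x * (margXZ p x z / margX p x) * (margYZ p y z / margZ p z) = p (x, y, z)
  rw [mul_div_cancel₀ _ (hX x), mul_div_assoc', ← hXYZ, mul_div_cancel_right₀ _ (hZ z)]

lemma mul_log_div_projV (p : A × B × C → ℝ) (w : A × B × C) :
    p w * log (p w / projV p w) =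
      p w * log (margXY p w.1 w.2.1 / (margX p w.1 * margY p w.2.1)) := by
  rcases eq_or_ne (p w) 0 with h | h
  · simp [h]
  · change p w * log (p w / (margX p w.1 * margY p w.2.1 * (p w / margXY p w.1 w.2.1))) = _
    congr 2
    field_simp

theorem klDiv_projV (p : A × B × C → ℝ) : klDiv p (projV p) = mutualInfoXY p := by
  simp only [klDiv, mul_log_div_projV, Fintype.sum_prod_type, mutualInfoXY, margXY, Finset.sum_mul]

end Projections

lemma sq_div_two_le_mul_log_add_mul_log {s : ℝ} (hs₀ : 0 ≤ s) (hs : s ≤ 1 / 2) :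
    s ^ 2 / 2 ≤ (1 + s) * log (1 + s) + (1 - s) * log (1 - s) := by
  have hsq : 0 < 1 - s ^ 2 := by nlinarith
  have hsplit : (1 + s) * log (1 + s) + (1 - s) * log (1 - s) =
      log (1 - s ^ 2) + s * log ((1 + s) / (1 - s)) := by
    rw [log_div (by linarith) (by linarith), show 1 - s ^ 2 = (1 + s) * (1 - s) by ring,
      log_mul (by linarith) (by linarith)]
    ring
  have heven : -(3 / 2 * s ^ 2) ≤ log (1 - s ^ 2) := by
    have hinv : (1 - s ^ 2)⁻¹ ≤ 1 + 3 / 2 * s ^ 2 := by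
      rw [inv_le_iff_one_le_mul₀ hsq]
      nlinarith [mul_nonneg (sq_nonneg s) (by nlinarith : (0 : ℝ) ≤ 1 / 3 - s ^ 2)]
    linarith [one_sub_inv_le_log_of_pos hsq]
  have hodd : 2 * s ^ 2 ≤ s * log ((1 + s) / (1 - s)) := by
    have := sum_range_le_log_div hs₀ (by linarith) 1
    simp only [Finset.sum_range_one] at this
    nlinarith
  linarith

section P1

variable (a : ℝ)

lemma margX_P1 (x : Bool) : margX (P1 a) x = 1 / 2 := by
  cases x <;> simp [margX, P1] <;> ring

lemma margY_P1 (y : Bool) : margY (P1 a) y = 1 / 2 := by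
  cases y <;> simp [margY, P1] <;> ring

lemma margZ_P1 (z : Bool) : margZ (P1 a) z = 1 / 2 := by
  cases z <;> simp [margZ, P1] <;> ring

lemma margXY_P1 (x y : Bool) :
    margXY (P1 a) x y = if x = y then (2 + a) / 8 else (2 - a) / 8 := by
  cases x <;> cases y <;> simp [margXY, P1] <;> ring

lemma margXZ_P1 (x z : Bool) :
    margXZ (P1 a) x z = 1 / 2 * (1 / 4 + 1 / 2 * if x = z then 1 else 0) := by
  cases x <;> cases z <;> simp [margXZ, P1] <;> ring

lemma margYZ_P1 (y z : Bool) :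
    margYZ (P1 a) y z = 1 / 2 * ((1 - a) / 2 + a * if y = z then 1 else 0) := by
  cases y <;> cases z <;> simp [margYZ, P1] <;> ring

lemma projChain_P1 : projChain (P1 a) = P1 a :=
  projChain_eq_self (by simp [margX_P1]) (by simp [margZ_P1]) fun x y z => by
    rw [margZ_P1, margXZ_P1, margYZ_P1, P1]; ring

lemma mutualInfoXY_P1 :
    mutualInfoXY (P1 a) = ((1 + a / 2) * log (1 + a / 2) + (1 - a / 2) * log (1 - a / 2)) / 2 := by
  norm_num [mutualInfoXY, margXY_P1, margX_P1, margY_P1]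
  ring_nf

end P1

/-- `d_KL(P1 ‖ (P1)_{G1}) = 0` for the chain `X → Z → Y`, and for all small enough `α > 0`,
`d_KL(P1 ‖ (P1)_{G2}) = Ω(α²)` for the v-structure `X → Z ← Y`. -/
theorem kl_P1_projections :
    (∀ a : ℝ, 0 ≤ a → a < 1 / 2 → klDiv (P1 a) (projChain (P1 a)) = 0) ∧
      ∃ c : ℝ, 0 < c ∧ ∃ a₀ : ℝ, 0 < a₀ ∧ a₀ < 1 / 2 ∧
        ∀ a : ℝ, 0 < a → a ≤ a₀ → c * a ^ 2 ≤ klDiv (P1 a) (projV (P1 a)) := by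
  refine ⟨fun a _ _ => by rw [projChain_P1, klDiv_self], 1 / 16, by norm_num, 1 / 4, by norm_num,
    by norm_num, fun a ha ha₀ => ?_⟩
  have := sq_div_two_le_mul_log_add_mul_log (s := a / 2) (by positivity) (by linarith)
  rw [klDiv_projV, mutualInfoXY_P1]
  linarith
end
end

section
/- For all real numbers a and b with b > 0 and a ≥ −b, (1/3)·min(a²/b, |a|·log(2 + |a|/b)) ≤ (a+b)·log((a+b)/b) − a ≤ min(a²/b, |a|·log(2 + |a|/b)). -/
/-!
Dividing by `b` reduces everything to Bennett's function `h(t) = (1+t)·log(1+t) − t` at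
`t = a/b ≥ −1`. The upper bounds follow from `log(1+t) ≤ t`, together with `s ≤ log(2+s)` on
`[0, 1]` when `t < 0`. For the lower bound, `h(t) ≥ t²/3` on `[−1, 1]` and
`3·h(t) ≥ t·log(2+t)` for `t ≥ 1`; both come from rational bounds on `log`: the first two terms
of the series `log x = 2·artanh((x−1)/(x+1))` from below, and `log y ≤ sinh (log y) = (y − y⁻¹)/2`
from above.
-/

open Real

theorem Real.log_le_sub_inv_div_two {y : ℝ} (hy : 1 ≤ y) : log y ≤ (y - y⁻¹) / 2 := by
  rw [← sinh_log (by positivity)]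
  exact self_le_sinh_iff.2 (log_nonneg hy)

theorem Real.le_log_one_add {t : ℝ} (ht : 0 < t) :
    2 * (t / (2 + t) + (t / (2 + t)) ^ 3 / 3) ≤ log (1 + t) := by
  have hs := hasSum_log_one_add_inv (inv_pos.2 ht)
  rw [inv_inv] at hs
  have h := sum_le_hasSum (Finset.range 2) (fun k _ => by positivity) hs
  have hz : 1 / (2 * t⁻¹ + 1) = t / (2 + t) := by field_simp
  simp only [Finset.sum_range_succ, Finset.sum_range_zero, hz] at h
  norm_num at h
  linarith

theorem Real.le_log_two_add {s : ℝ} (hs0 : 0 ≤ s) (hs1 : s ≤ 1) : s ≤ log (2 + s) := by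
  have h := le_log_one_add (by linarith : 0 < 1 + s)
  rw [show 1 + (1 + s) = 2 + s by ring, show 2 + (1 + s) = 3 + s by ring] at h
  have hz : s ≤ 2 * ((1 + s) / (3 + s)) := by
    rw [mul_div_assoc', le_div_iff₀ (by linarith)]
    nlinarith
  nlinarith [pow_nonneg (div_nonneg (by linarith : 0 ≤ 1 + s) (by linarith : (0 : ℝ) ≤ 3 + s)) 3]

noncomputable def bennettH (t : ℝ) : ℝ := (1 + t) * log (1 + t) - t

theorem bennettH_le_sq {t : ℝ} (ht : -1 ≤ t) : bennettH t ≤ t ^ 2 := by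
  rcases ht.eq_or_lt with rfl | ht
  · norm_num [bennettH]
  have hlog : log (1 + t) ≤ t := by linarith [log_le_sub_one_of_pos (by linarith : 0 < 1 + t)]
  unfold bennettH
  nlinarith [mul_le_mul_of_nonneg_left hlog (by linarith : 0 ≤ 1 + t)]

theorem bennettH_le_abs_mul_log {t : ℝ} (ht : -1 ≤ t) :
    bennettH t ≤ |t| * log (2 + |t|) := by
  rcases le_or_gt 0 t with hnonneg | hneg
  · rw [abs_of_nonneg hnonneg]
    have hlog : log (1 + t) ≤ t := by linarith [log_le_sub_one_of_pos (by linarith : 0 < 1 + t)]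
    have hmono : log (1 + t) ≤ log (2 + t) := log_le_log (by linarith) (by linarith)
    unfold bennettH
    nlinarith [mul_le_mul_of_nonneg_left hmono hnonneg]
  · rw [abs_of_neg hneg]
    calc bennettH t ≤ (-t) * (-t) := by nlinarith [bennettH_le_sq ht]
      _ ≤ (-t) * log (2 + -t) :=
        mul_le_mul_of_nonneg_left (le_log_two_add (by linarith) (by linarith)) (by linarith)

theorem sq_div_three_le_bennettH {t : ℝ} (ht : -1 ≤ t) (ht1 : t ≤ 1) : t ^ 2 / 3 ≤ bennettH t := by
  rcases ht.eq_or_lt with rfl | ht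
  · norm_num [bennettH]
  rcases le_or_gt t 0 with hnonpos | hpos
  · have hx : 0 < 1 + t := by linarith
    have h := log_le_sub_inv_div_two (one_le_inv_iff₀.2 ⟨hx, by linarith⟩)
    rw [log_inv, inv_inv] at h
    have hmul : ((1 + t) ^ 2 - 1) / 2 ≤ (1 + t) * log (1 + t) := by
      have := mul_le_mul_of_nonneg_left h hx.le
      rw [mul_div_assoc', mul_sub, mul_inv_cancel₀ hx.ne'] at this
      nlinarith
    unfold bennettH
    nlinarith
  · have h := le_log_one_add hpos
    have hz : 0 ≤ t / (2 + t) := div_nonneg hpos.le (by linarith)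
    have hzt : t / (2 + t) * (2 + t) = t := div_mul_cancel₀ t (by linarith)
    unfold bennettH
    nlinarith [mul_le_mul_of_nonneg_left h (by linarith : 0 ≤ 1 + t), pow_nonneg hz 3]

theorem mul_log_two_add_le_three_mul_bennettH {t : ℝ} (ht : 1 ≤ t) :
    t * log (2 + t) ≤ 3 * bennettH t := by
  have h1 : 0 < 1 + t := by linarith
  have h2 : 0 < 2 + t := by linarith
  have hsplit : log (2 + t) = log (1 + t) + log ((2 + t) / (1 + t)) := by
    rw [← log_mul h1.ne' (by positivity)]
    congr 1
    field_simp
  have hD := log_le_sub_inv_div_two ((one_le_div h1).2 (by linarith) : 1 ≤ (2 + t) / (1 + t))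
  rw [inv_div] at hD
  have hL := le_log_one_add (by linarith : 0 < t)
  have hrational : 3 * t + t * (((2 + t) / (1 + t) - (1 + t) / (2 + t)) / 2) ≤
      (3 + 2 * t) * (2 * (t / (2 + t) + (t / (2 + t)) ^ 3 / 3)) := by
    have hdiff : (3 + 2 * t) * (2 * (t / (2 + t) + (t / (2 + t)) ^ 3 / 3)) -
        (3 * t + t * (((2 + t) / (1 + t) - (1 + t) / (2 + t)) / 2)) =
        t * (14 * t ^ 4 + 44 * t ^ 3 + 27 * t ^ 2 - 36 * t - 36) / (6 * (1 + t) * (2 + t) ^ 3) := by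
      field_simp
      ring
    have hs : 0 ≤ t - 1 := by linarith
    have hN : 0 ≤ 14 * t ^ 4 + 44 * t ^ 3 + 27 * t ^ 2 - 36 * t - 36 := by
      nlinarith [pow_nonneg hs 2, pow_nonneg hs 3, pow_nonneg hs 4]
    have := div_nonneg (mul_nonneg (by linarith : 0 ≤ t) hN)
      (by positivity : (0 : ℝ) ≤ 6 * (1 + t) * (2 + t) ^ 3)
    linarith
  unfold bennettH
  rw [hsplit]
  nlinarith [mul_le_mul_of_nonneg_left hD (by linarith : 0 ≤ t),
    mul_le_mul_of_nonneg_left hL (by linarith : 0 ≤ 3 + 2 * t)]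

theorem min_sq_abs_mul_log_le_three_mul_bennettH {t : ℝ} (ht : -1 ≤ t) :
    min (t ^ 2) (|t| * log (2 + |t|)) ≤ 3 * bennettH t := by
  rcases le_or_gt t 1 with ht1 | ht1
  · linarith [min_le_left (t ^ 2) (|t| * log (2 + |t|)), sq_div_three_le_bennettH ht ht1]
  · rw [abs_of_pos (by linarith : 0 < t)]
    exact (min_le_right _ _).trans (mul_log_two_add_le_three_mul_bennettH ht1.le)

theorem mul_log_div_sub_eq_mul_bennettH (a : ℝ) {b : ℝ} (hb : b ≠ 0) :
    (a + b) * log ((a + b) / b) - a = b * bennettH (a / b) := by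
  rw [bennettH, add_div, div_self hb, add_comm (a / b)]
  field_simp
  ring

theorem min_sq_abs_mul_log_div_eq_mul (a : ℝ) {b : ℝ} (hb : 0 < b) :
    min (a ^ 2 / b) (|a| * log (2 + |a| / b)) =
      b * min ((a / b) ^ 2) (|a / b| * log (2 + |a / b|)) := by
  rw [mul_min_of_nonneg _ _ hb.le, abs_div, abs_of_pos hb]
  congr 1 <;> field_simp

/-- For `b > 0` and `a ≥ −b`,
`(1/3)·min(a²/b, |a|·log(2 + |a|/b)) ≤ (a+b)·log((a+b)/b) − a ≤ min(a²/b, |a|·log(2 + |a|/b))`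
(natural logarithm; the convention `0·log 0 = 0` holds since `Real.log 0 = 0`). -/
theorem f_two_sided_bounds (a b : ℝ) (hb : 0 < b) (hab : -b ≤ a) :
    (1 / 3) * min (a ^ 2 / b) (|a| * Real.log (2 + |a| / b)) ≤
        (a + b) * Real.log ((a + b) / b) - a ∧
      (a + b) * Real.log ((a + b) / b) - a ≤
        min (a ^ 2 / b) (|a| * Real.log (2 + |a| / b)) := by
  have ht : -1 ≤ a / b := by rwa [le_div_iff₀ hb, neg_one_mul]
  rw [mul_log_div_sub_eq_mul_bennettH a hb.ne', min_sq_abs_mul_log_div_eq_mul a hb]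
  constructor
  · have := mul_le_mul_of_nonneg_left (min_sq_abs_mul_log_le_three_mul_bennettH ht) hb.le
    linarith
  · exact mul_le_mul_of_nonneg_left
      (le_min (bennettH_le_sq ht) (bennettH_le_abs_mul_log ht)) hb.le
end
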